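/- arXiv:2102.02093 — 3 statements merged into one kernel-verified Lean document; each statement's English description precedes it below -/
import Mathlib

section
/- Let n be a positive integer, let D be an n×n real diagonal matrix whose diagonal entries are all positive (in particular nonzero), and let A be an n×n real skew-symmetric matrix (Aᵀ = −A). Then every eigenvalue of the matrix J₀ = D·A (viewed as a complex matrix) is purely imaginary or zero; that is, every λ in the spectrum of J₀ over ℂ satisfies Re(λ) = 0. -/
/-!
If `D A v = μ v` with `v ≠ 0`, then `A v = μ D⁻¹ v`, so `v* A v = μ (v* D⁻¹ v)`. The left side is
purely imaginary because `A` is skew-Hermitian over `ℂ`, while `v* D⁻¹ v` is a positive real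
number because `D⁻¹` is positive definite; hence `Re μ = 0`.
-/

open Matrix

open scoped ComplexOrder

namespace Matrix

theorem exists_mulVec_eq_smul_of_mem_spectrum {K ι : Type*} [Field K] [Fintype ι]
    [DecidableEq ι] {M : Matrix ι ι K} {μ : K} (hμ : μ ∈ spectrum K M) :
    ∃ v ≠ 0, M *ᵥ v = μ • v := by
  rw [← spectrum_toLin', ← Module.End.hasEigenvalue_iff_mem_spectrum] at hμ
  obtain ⟨v, hv⟩ := hμ.exists_hasEigenvector
  exact ⟨v, hv.2, by simpa using hv.apply_eq_smul⟩

section RCLike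

variable {𝕜 ι : Type*} [RCLike 𝕜] [Fintype ι]

theorem re_star_dotProduct_mulVec_eq_zero {K : Matrix ι ι 𝕜} (hK : Kᴴ = -K) (v : ι → 𝕜) :
    RCLike.re (star v ⬝ᵥ K *ᵥ v) = 0 := by
  have hstar : star (star v ⬝ᵥ K *ᵥ v) = star v ⬝ᵥ Kᴴ *ᵥ v := by
    rw [star_dotProduct, star_star, star_mulVec, dotProduct_mulVec]
  rw [hK, neg_mulVec, dotProduct_neg] at hstar
  have hre := congrArg RCLike.re hstar
  rw [RCLike.star_def, RCLike.conj_re, map_neg] at hre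
  linarith

theorem re_eq_zero_of_mulVec_eq_smul_posDef_mulVec {K P : Matrix ι ι 𝕜} (hK : Kᴴ = -K)
    (hP : P.PosDef) {μ : 𝕜} {v : ι → 𝕜} (hv : v ≠ 0) (hKv : K *ᵥ v = μ • P *ᵥ v) :
    RCLike.re μ = 0 := by
  have hre := re_star_dotProduct_mulVec_eq_zero hK v
  obtain ⟨hpos, hreal⟩ := RCLike.pos_iff.mp (hP.dotProduct_mulVec_pos hv)
  rw [hKv, dotProduct_smul, smul_eq_mul, RCLike.mul_re, hreal, mul_zero, sub_zero] at hre
  exact (mul_eq_zero.mp hre).resolve_right hpos.ne'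

theorem re_eq_zero_of_mem_spectrum_posDef_mul [DecidableEq ι] {K P : Matrix ι ι 𝕜}
    (hP : P.PosDef) (hK : Kᴴ = -K) {μ : 𝕜} (hμ : μ ∈ spectrum 𝕜 (P * K)) :
    RCLike.re μ = 0 := by
  obtain ⟨v, hv, hPKv⟩ := exists_mulVec_eq_smul_of_mem_spectrum hμ
  refine re_eq_zero_of_mulVec_eq_smul_posDef_mulVec hK hP.inv hv ?_
  calc K *ᵥ v = P⁻¹ *ᵥ ((P * K) *ᵥ v) := by
        rw [mulVec_mulVec, nonsing_inv_mul_cancel_left _ _ ((isUnit_iff_isUnit_det P).mp hP.isUnit)]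
    _ = μ • P⁻¹ *ᵥ v := by rw [hPKv, mulVec_smul]

end RCLike

variable {ι : Type*}

theorem conjTranspose_map_ofReal_eq_neg {A : Matrix ι ι ℝ} (hA : Aᵀ = -A) :
    (A.map (Complex.ofReal ·))ᴴ = -A.map (Complex.ofReal ·) := by
  ext i j
  simpa using congrArg (fun M : Matrix ι ι ℝ => (M i j : ℂ)) hA

theorem map_ofReal_diagonal_mul [Fintype ι] [DecidableEq ι] (d : ι → ℝ) (A : Matrix ι ι ℝ) :
    (diagonal d * A).map (Complex.ofReal ·) =
      diagonal (fun i => (d i : ℂ)) * A.map (Complex.ofReal ·) :=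
  (Matrix.map_mul (f := Complex.ofRealHom)).trans (by rw [diagonal_map (map_zero _)]; rfl)

end Matrix

theorem stmt_0_general (n : ℕ) (d : Fin n → ℝ) (hd : ∀ i, 0 < d i)
    (A : Matrix (Fin n) (Fin n) ℝ) (hA : Aᵀ = -A) :
    ∀ μ ∈ spectrum ℂ ((Matrix.diagonal d * A).map (Complex.ofReal ·)), μ.re = 0 := by
  intro μ hμ
  rw [map_ofReal_diagonal_mul] at hμ
  have hD : (diagonal fun i => (d i : ℂ)).PosDef :=
    posDef_diagonal_iff.mpr fun i => Complex.zero_lt_real.mpr (hd i)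
  exact re_eq_zero_of_mem_spectrum_posDef_mul hD (conjTranspose_map_ofReal_eq_neg hA) hμ

/-- Lemma 1: if `D` is a real diagonal matrix with positive diagonal entries and `A` is a
real skew-symmetric matrix, every eigenvalue of `J₀ = D * A` (over `ℂ`) is purely
imaginary or zero. -/
theorem stmt_0 (n : ℕ) (hn : 0 < n) (d : Fin n → ℝ) (hd : ∀ i, 0 < d i)
    (A : Matrix (Fin n) (Fin n) ℝ) (hA : Aᵀ = -A) :
    ∀ μ ∈ spectrum ℂ ((Matrix.diagonal d * A).map (Complex.ofReal ·)), μ.re = 0 :=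
  stmt_0_general n d hd A hA
end

section
/- The negative redundancy (negative overhead) F₃ is convex: let S be a finite set of vertices and E ⊆ S × S a set of arcs. For p : E → ℝ, define the row marginal p_{i·} = Σ_{j : (i,j) ∈ E} p(i,j) and the column marginal p_{·j} = Σ_{i : (i,j) ∈ E} p(i,j). Then the function F₃(p) = Σ_{(i,j) ∈ E} p(i,j) · log( p(i,j)² / (p_{i·} · p_{·j}) ) is convex on the set {p | ∀ (i,j) ∈ E, 0 < p(i,j)} of strictly positive vectors. -/
/-!
Splitting the logarithm, `F₃(p) = ∑ₑ pₑ log (pₑ / p_{i·}) + ∑ₑ pₑ log (pₑ / p_{·j})`. Each summand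
`x log (x / y)` is the perspective `y φ (x / y)` of the convex function `φ t = t log t`, evaluated at
the linear image `(pₑ, marginal)` of `p`. Perspectives of convex functions are jointly convex, and
convexity survives precomposition with linear maps and finite sums.
-/

open Finset Real

section

variable {E : Type*} [AddCommGroup E] [Module ℝ E]

lemma inv_smul_add_smul_eq {x₁ x₂ : E} {y₁ y₂ a b : ℝ} (hy₁ : 0 < y₁) (hy₂ : 0 < y₂)
    (hy : 0 < a * y₁ + b * y₂) :
    (a * y₁ + b * y₂)⁻¹ • (a • x₁ + b • x₂) =
      (a * y₁ / (a * y₁ + b * y₂)) • (y₁⁻¹ • x₁) + (b * y₂ / (a * y₁ + b * y₂)) • (y₂⁻¹ • x₂) := by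
  simp only [smul_add, smul_smul]
  congr 2 <;> field_simp

lemma perspective_weights_add {y₁ y₂ a b : ℝ} (hy : 0 < a * y₁ + b * y₂) :
    a * y₁ / (a * y₁ + b * y₂) + b * y₂ / (a * y₁ + b * y₂) = 1 := by
  field_simp

theorem ConvexOn.perspective {s : Set E} {f : E → ℝ} (hf : ConvexOn ℝ s f) :
    ConvexOn ℝ {q : E × ℝ | 0 < q.2 ∧ q.2⁻¹ • q.1 ∈ s} (fun q => q.2 * f (q.2⁻¹ • q.1)) := by
  have hpos : ∀ {y₁ y₂ a b : ℝ}, 0 < y₁ → 0 < y₂ → 0 ≤ a → 0 ≤ b → a + b = 1 →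
      0 < a * y₁ + b * y₂ := by
    intro y₁ y₂ a b hy₁ hy₂ ha hb hab
    rcases ha.eq_or_lt with rfl | ha
    · simp_all
    · positivity
  refine ⟨?_, ?_⟩
  · rintro ⟨x₁, y₁⟩ ⟨hy₁, hx₁⟩ ⟨x₂, y₂⟩ ⟨hy₂, hx₂⟩ a b ha hb hab
    have hy := hpos hy₁ hy₂ ha hb hab
    refine ⟨by simpa using hy, ?_⟩
    simp only [Prod.smul_mk, Prod.mk_add_mk, smul_eq_mul]
    rw [inv_smul_add_smul_eq hy₁ hy₂ hy]
    exact hf.1 hx₁ hx₂ (by positivity) (by positivity) (perspective_weights_add hy)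
  · rintro ⟨x₁, y₁⟩ ⟨hy₁, hx₁⟩ ⟨x₂, y₂⟩ ⟨hy₂, hx₂⟩ a b ha hb hab
    have hy := hpos hy₁ hy₂ ha hb hab
    simp only [Prod.smul_mk, Prod.mk_add_mk, smul_eq_mul]
    rw [inv_smul_add_smul_eq hy₁ hy₂ hy]
    calc (a * y₁ + b * y₂) * f _
        ≤ (a * y₁ + b * y₂) * ((a * y₁ / (a * y₁ + b * y₂)) • f (y₁⁻¹ • x₁) +
            (b * y₂ / (a * y₁ + b * y₂)) • f (y₂⁻¹ • x₂)) := by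
          gcongr
          exact hf.2 hx₁ hx₂ (by positivity) (by positivity) (perspective_weights_add hy)
      _ = a * (y₁ * f (y₁⁻¹ • x₁)) + b * (y₂ * f (y₂⁻¹ • x₂)) := by
          simp only [smul_eq_mul]
          field_simp

theorem convexOn_mul_log_div :
    ConvexOn ℝ (Set.Ioi 0 ×ˢ Set.Ioi 0) (fun q : ℝ × ℝ => q.1 * log (q.1 / q.2)) := by
  refine (convexOn_mul_log.perspective.subset ?_ ((convex_Ioi 0).prod (convex_Ioi 0))).congr ?_
  · rintro ⟨x, y⟩ ⟨hx : 0 < x, hy : 0 < y⟩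
    exact ⟨hy, Set.mem_Ici.2 (by simp only [smul_eq_mul]; positivity)⟩
  · rintro ⟨x, y⟩ ⟨-, hy : 0 < y⟩
    simp only [smul_eq_mul]
    field_simp

theorem ConvexOn.mul_log_div_linearMap {s : Set E}
    (hs : Convex ℝ s) (u v : E →ₗ[ℝ] ℝ) (hu : ∀ x ∈ s, 0 < u x) (hv : ∀ x ∈ s, 0 < v x) :
    ConvexOn ℝ s (fun x => u x * log (u x / v x)) :=
  (convexOn_mul_log_div.comp_linearMap (u.prod v)).subset (fun x hx => ⟨hu x hx, hv x hx⟩) hs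

theorem ConvexOn.finsetSum {ι : Type*} {s : Set E}
    (hs : Convex ℝ s) {t : Finset ι} {f : ι → E → ℝ}
    (h : ∀ i ∈ t, ConvexOn ℝ s (f i)) : ConvexOn ℝ s (fun x => ∑ i ∈ t, f i x) := by
  classical
  induction t using Finset.induction_on with
  | empty => simpa using convexOn_const 0 hs
  | insert i t hi ih =>
    simp only [sum_insert hi]
    exact (h i (mem_insert_self i t)).add (ih fun j hj => h j (mem_insert_of_mem hj))

end

theorem convexOn_mul_log_div_sum {ι : Type*} {E t : Finset ι} {e : ι} (he : e ∈ t) (ht : t ⊆ E) :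
    ConvexOn ℝ {p : ι → ℝ | ∀ e ∈ E, 0 < p e} (fun p => p e * log (p e / ∑ e' ∈ t, p e')) := by
  have hsum (p : ι → ℝ) : (∑ e' ∈ t, LinearMap.proj (R := ℝ) e') p = ∑ e' ∈ t, p e' :=
    LinearMap.sum_apply _ _ _
  refine (ConvexOn.mul_log_div_linearMap (convex_pi fun _ _ => convex_Ioi 0)
    (LinearMap.proj e) (∑ e' ∈ t, LinearMap.proj e') (fun p hp => hp e (ht he))
    fun p hp => ?_).congr fun p _ => by simp only [LinearMap.proj_apply, hsum]
  rw [hsum]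
  exact sum_pos (fun e' he' => hp e' (ht he')) ⟨e, he⟩

lemma mul_log_sq_div_mul {x r c : ℝ} (hx : 0 < x) (hr : 0 < r) (hc : 0 < c) :
    x * log (x ^ 2 / (r * c)) = x * log (x / r) + x * log (x / c) := by
  rw [← mul_add, ← log_mul (by positivity) (by positivity), div_mul_div_comm, sq]

theorem stmt_7_general (S : Type*) [DecidableEq S] (E : Finset (S × S)) :
    ConvexOn ℝ {p : S × S → ℝ | ∀ e ∈ E, 0 < p e}
      (fun p : S × S → ℝ => ∑ e ∈ E, p e *
        Real.log (p e ^ 2 /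
          ((∑ e' ∈ E.filter (fun e' => e'.1 = e.1), p e') *
           (∑ e' ∈ E.filter (fun e' => e'.2 = e.2), p e')))) := by
  have hrow (e) (he : e ∈ E) := convexOn_mul_log_div_sum
    (t := E.filter (fun e' => e'.1 = e.1)) (mem_filter.2 ⟨he, rfl⟩) (filter_subset _ _)
  have hcol (e) (he : e ∈ E) := convexOn_mul_log_div_sum
    (t := E.filter (fun e' => e'.2 = e.2)) (mem_filter.2 ⟨he, rfl⟩) (filter_subset _ _)
  refine (ConvexOn.finsetSum (convex_pi fun _ _ => convex_Ioi 0)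
    fun e he => (hrow e he).add (hcol e he)).congr fun p hp => sum_congr rfl fun e he => ?_
  have hmarg {t : Finset (S × S)} (het : e ∈ t) (ht : t ⊆ E) : 0 < ∑ e' ∈ t, p e' :=
    sum_pos (fun e' he' => hp e' (ht he')) ⟨e, het⟩
  exact (mul_log_sq_div_mul (hp e he)
    (hmarg (t := E.filter fun e' => e'.1 = e.1) (mem_filter.2 ⟨he, rfl⟩) (filter_subset _ _))
    (hmarg (t := E.filter fun e' => e'.2 = e.2) (mem_filter.2 ⟨he, rfl⟩) (filter_subset _ _))).symm

/-- Negative redundancy (negative overhead)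
`F₃(p) = ∑_{(i,j) ∈ E} p(i,j) * log (p(i,j)² / (p_{i·} p_{·j}))` is convex on the set of
vectors that are strictly positive on the arcs `E`, where `p_{i·}` and `p_{·j}` denote
the row and column marginals over `E`. -/
theorem stmt_7 (S : Type*) [Fintype S] [DecidableEq S] (E : Finset (S × S)) :
    ConvexOn ℝ {p : S × S → ℝ | ∀ e ∈ E, 0 < p e}
      (fun p : S × S → ℝ => ∑ e ∈ E, p e *
        Real.log (p e ^ 2 /
          ((∑ e' ∈ E.filter (fun e' => e'.1 = e.1), p e') *
           (∑ e' ∈ E.filter (fun e' => e'.2 = e.2), p e')))) :=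
  stmt_7_general S E
end

section
/- The ascendency is not convex: the function A : ℝ³ → ℝ defined on triples (f₁₂, f₂₃, f₁₃) by A(f₁₂, f₂₃, f₁₃) = f₁₃ · log( f₁₃ / ((f₁₃ + f₁₂)(f₂₃ + f₁₃)) ) − f₂₃ · log(f₂₃ + f₁₃) − f₁₂ · log(f₁₃ + f₁₂) is not convex on the set {(f₁₂, f₂₃, f₁₃) | f₁₂ > 0, f₂₃ > 0, f₁₃ > 0} of strictly positive triples. -/
/-!
Along the line `f₂₃ = f₁₃ = 1` the ascendency is `A(t - 1, 1, 1) = -t log t - 2 log 2`, which is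
strictly concave in `t`; a function that is strictly concave on a segment cannot be convex there.
-/

open Real Set

theorem StrictConcaveOn.not_convexOn {𝕜 E β : Type*} [Field 𝕜] [LinearOrder 𝕜]
    [IsStrictOrderedRing 𝕜] [AddCommMonoid E] [Module 𝕜 E] [AddCommMonoid β] [PartialOrder β]
    [SMul 𝕜 β] {s : Set E} {f : E → β} (hf : StrictConcaveOn 𝕜 s f) {x y : E} (hx : x ∈ s)
    (hy : y ∈ s) (hxy : x ≠ y) : ¬ ConvexOn 𝕜 s f := fun hconv =>
  (hf.2 hx hy hxy one_half_pos one_half_pos (add_halves 1)).not_ge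
    (hconv.2 hx hy one_half_pos.le one_half_pos.le (add_halves 1))

noncomputable def ascendency (f : ℝ × ℝ × ℝ) : ℝ :=
  f.2.2 * log (f.2.2 / ((f.2.2 + f.1) * (f.2.1 + f.2.2)))
    - f.2.1 * log (f.2.1 + f.2.2)
    - f.1 * log (f.2.2 + f.1)

theorem ascendency_sub_one_one_one {t : ℝ} (ht : t ≠ 0) :
    ascendency (t - 1, 1, 1) = negMulLog t - 2 * log 2 := by
  simp only [ascendency, negMulLog, add_sub_cancel, one_add_one_eq_two, one_div, log_inv,
    log_mul ht two_ne_zero]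
  ring

theorem lineMap_neg_one_one_one_apply (t : ℝ) :
    AffineMap.lineMap ((-1, 1, 1) : ℝ × ℝ × ℝ) (0, 1, 1) t = (t - 1, 1, 1) := by
  simp [AffineMap.lineMap_apply_module]

/-- The ascendency
`A(f₁₂, f₂₃, f₁₃) = f₁₃ log(f₁₃/((f₁₃+f₁₂)(f₂₃+f₁₃))) − f₂₃ log(f₂₃+f₁₃) − f₁₂ log(f₁₃+f₁₂)`
is not convex on the open positive octant of `ℝ³`. -/
theorem stmt_8 :
    ¬ ConvexOn ℝ {f : ℝ × ℝ × ℝ | 0 < f.1 ∧ 0 < f.2.1 ∧ 0 < f.2.2}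
      (fun f : ℝ × ℝ × ℝ =>
        f.2.2 * Real.log (f.2.2 / ((f.2.2 + f.1) * (f.2.1 + f.2.2)))
          - f.2.1 * Real.log (f.2.1 + f.2.2)
          - f.1 * Real.log (f.2.2 + f.1)) := by
  intro h
  have hpre : AffineMap.lineMap ((-1, 1, 1) : ℝ × ℝ × ℝ) (0, 1, 1) ⁻¹'
      {f : ℝ × ℝ × ℝ | 0 < f.1 ∧ 0 < f.2.1 ∧ 0 < f.2.2} = Ioi (1 : ℝ) := by
    ext t
    simp [lineMap_neg_one_one_one_apply]
  have hline : ConvexOn ℝ (Ioi 1) fun t => negMulLog t - 2 * log 2 := by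
    refine (hpre ▸ h.comp_affineMap (AffineMap.lineMap (-1, 1, 1) (0, 1, 1))).congr fun t ht => ?_
    rw [Function.comp_apply, lineMap_neg_one_one_one_apply]
    exact ascendency_sub_one_one_one (zero_lt_one.trans ht).ne'
  have hconcave : StrictConcaveOn ℝ (Ioi 1) fun t => negMulLog t - 2 * log 2 :=
    (strictConcaveOn_negMulLog.subset (Ioi_subset_Ici zero_le_one) (convex_Ioi 1)).add_const _
  exact hconcave.not_convexOn (mem_Ioi.2 one_lt_two) (mem_Ioi.2 (by norm_num : (1 : ℝ) < 3))
    (by norm_num) hline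
end
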